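/- arXiv:2310.00885 — 4 statements merged into one kernel-verified Lean document; each statement's English description precedes it below -/
import Mathlib

section
/- Let θ > 0 and β > 0, and define A(s) = e^{-θs} ∫₀^s e^{θr} r^{β-1} dr for s ≥ 0. Then there exists a constant C > 0 such that for all s ≥ 0, A(s) ≤ C · min(s^{β-1}, s^β). -/
set_option maxHeartbeats 1000000


open Real Filter MeasureTheory intervalIntegral Set

private lemma expQuad (x : ℝ) (hx : 0 ≤ x) : x ^ 2 / 4 ≤ Real.exp x := by
  have h := Real.add_one_le_exp (x / 2)
  have h2 : Real.exp (x / 2) * Real.exp (x / 2) = Real.exp x := by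
    rw [← Real.exp_add]; ring_nf
  nlinarith [Real.exp_pos (x / 2)]

private lemma intAux (θ β : ℝ) (hβ : 0 < β) (a b : ℝ) :
    IntervalIntegrable (fun r => Real.exp (θ * r) * r ^ (β - 1)) volume a b := by
  apply IntervalIntegrable.continuousOn_mul (intervalIntegrable_rpow' (by linarith))
  exact (Real.continuous_exp.comp (continuous_const.mul continuous_id)).continuousOn

private lemma intExp (θ : ℝ) (hθ : θ ≠ 0) (a b : ℝ) :
    ∫ r in a..b, Real.exp (θ * r) = (Real.exp (θ * b) - Real.exp (θ * a)) / θ := by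
  rw [intervalIntegral.integral_comp_mul_left (fun x => Real.exp x) hθ, integral_exp,
    smul_eq_mul]
  field_simp

theorem stmt_0 (θ β : ℝ) (hθ : 0 < θ) (hβ : 0 < β)
    (A : ℝ → ℝ)
    (hA : ∀ s, A s = Real.exp (-θ * s) * ∫ r in (0:ℝ)..s, Real.exp (θ * r) * r ^ (β - 1)) :
    ∃ C > 0, ∀ s ≥ (0:ℝ), A s ≤ C * min (s ^ (β - 1)) (s ^ β) := by
  set M : ℝ := max 1 (2 ^ (1 - β)) with hM
  have hMpos : 0 < M := lt_of_lt_of_le one_pos (le_max_left _ _)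
  set C : ℝ := max (1 / β) (16 / (β * θ ^ 2) + M / θ) with hC
  have hCpos : 0 < C := lt_of_lt_of_le (by positivity) (le_max_left _ _)
  refine ⟨C, hCpos, fun s hs => ?_⟩
  rcases eq_or_lt_of_le hs with h0 | h0
  · -- s = 0
    rw [hA, ← h0]
    simp only [intervalIntegral.integral_same, mul_zero]
    have : min ((0:ℝ) ^ (β - 1)) ((0:ℝ) ^ β) = 0 := by
      rw [Real.zero_rpow hβ.ne', min_eq_right (Real.rpow_nonneg le_rfl _)]
    rw [this, mul_zero]
  -- s > 0
  have hspos : (0:ℝ) < s := h0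
  -- the small-s bound : A s ≤ s^β / β, valid for all s > 0
  have hsmall : A s ≤ s ^ β / β := by
    have hmono : (∫ r in (0:ℝ)..s, Real.exp (θ * r) * r ^ (β - 1)) ≤
        ∫ r in (0:ℝ)..s, Real.exp (θ * s) * r ^ (β - 1) := by
      apply intervalIntegral.integral_mono_on hs (intAux θ β hβ 0 s)
        ((intervalIntegrable_rpow' (by linarith)).const_mul _)
      intro r hr
      have h1 : Real.exp (θ * r) ≤ Real.exp (θ * s) :=
        Real.exp_le_exp.mpr (by nlinarith [hr.1, hr.2])
      exact mul_le_mul_of_nonneg_right h1 (Real.rpow_nonneg hr.1 _)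
    have hval : (∫ r in (0:ℝ)..s, Real.exp (θ * s) * r ^ (β - 1)) =
        Real.exp (θ * s) * (s ^ β / β) := by
      rw [intervalIntegral.integral_const_mul, integral_rpow (Or.inl (by linarith))]
      rw [Real.zero_rpow (by linarith : β - 1 + 1 ≠ 0)]
      ring_nf
    rw [hA]
    calc Real.exp (-θ * s) * ∫ r in (0:ℝ)..s, Real.exp (θ * r) * r ^ (β - 1)
        ≤ Real.exp (-θ * s) * (Real.exp (θ * s) * (s ^ β / β)) := by
          rw [← hval]; exact mul_le_mul_of_nonneg_left hmono (Real.exp_nonneg _)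
      _ = s ^ β / β := by
          rw [← mul_assoc, ← Real.exp_add]; ring_nf; rw [Real.exp_zero]; ring
  rcases le_or_gt s 1 with hs1 | hs1
  · -- 0 < s ≤ 1, min = s^β
    have hmin : min (s ^ (β - 1)) (s ^ β) = s ^ β :=
      min_eq_right (Real.rpow_le_rpow_of_exponent_ge hspos hs1 (by linarith))
    rw [hmin]
    calc A s ≤ s ^ β / β := hsmall
      _ = (1 / β) * s ^ β := by ring
      _ ≤ C * s ^ β :=
        mul_le_mul_of_nonneg_right (le_max_left _ _) (Real.rpow_nonneg hspos.le _)
  · -- s > 1, min = s^(β-1)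
    have hs1' : (1:ℝ) ≤ s := hs1.le
    have hmin : min (s ^ (β - 1)) (s ^ β) = s ^ (β - 1) :=
      min_eq_left (Real.rpow_le_rpow_of_exponent_le hs1' (by linarith))
    rw [hmin]
    have hsplit : (∫ r in (0:ℝ)..s, Real.exp (θ * r) * r ^ (β - 1)) =
        (∫ r in (0:ℝ)..(s/2), Real.exp (θ * r) * r ^ (β - 1)) +
        ∫ r in (s/2)..s, Real.exp (θ * r) * r ^ (β - 1) :=
      (intervalIntegral.integral_add_adjacent_intervals
        (intAux θ β hβ 0 (s/2)) (intAux θ β hβ (s/2) s)).symm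
    -- bound on first piece
    have hI1 : (∫ r in (0:ℝ)..(s/2), Real.exp (θ * r) * r ^ (β - 1)) ≤
        Real.exp (θ * (s/2)) * ((s/2) ^ β / β) := by
      have hmono : (∫ r in (0:ℝ)..(s/2), Real.exp (θ * r) * r ^ (β - 1)) ≤
          ∫ r in (0:ℝ)..(s/2), Real.exp (θ * (s/2)) * r ^ (β - 1) := by
        apply intervalIntegral.integral_mono_on (by linarith) (intAux θ β hβ 0 (s/2))
          ((intervalIntegrable_rpow' (by linarith)).const_mul _)
        intro r hr
        have h1 : Real.exp (θ * r) ≤ Real.exp (θ * (s/2)) :=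
          Real.exp_le_exp.mpr (by nlinarith [hr.1, hr.2])
        exact mul_le_mul_of_nonneg_right h1 (Real.rpow_nonneg hr.1 _)
      have hval : (∫ r in (0:ℝ)..(s/2), Real.exp (θ * (s/2)) * r ^ (β - 1)) =
          Real.exp (θ * (s/2)) * ((s/2) ^ β / β) := by
        rw [intervalIntegral.integral_const_mul, integral_rpow (Or.inl (by linarith))]
        rw [Real.zero_rpow (by linarith : β - 1 + 1 ≠ 0)]
        ring_nf
      linarith [hmono, hval.le]
    -- pointwise bound on second piece
    have hpt : ∀ r ∈ Icc (s/2) s, r ^ (β - 1) ≤ M * s ^ (β - 1) := by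
      intro r hr
      have hr0 : 0 < r := lt_of_lt_of_le (by linarith) hr.1
      rcases le_or_gt 1 β with hb | hb
      · have : r ^ (β - 1) ≤ s ^ (β - 1) :=
          Real.rpow_le_rpow hr0.le hr.2 (by linarith)
        calc r ^ (β - 1) ≤ s ^ (β - 1) := this
          _ = 1 * s ^ (β - 1) := (one_mul _).symm
          _ ≤ M * s ^ (β - 1) := mul_le_mul_of_nonneg_right (le_max_left _ _)
              (Real.rpow_nonneg hspos.le _)
      · have h1 : r ^ (β - 1) ≤ (s/2) ^ (β - 1) :=
          Real.rpow_le_rpow_of_nonpos (by linarith) hr.1 (by linarith)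
        have h2 : (s/2) ^ (β - 1) = 2 ^ (1 - β) * s ^ (β - 1) := by
          rw [Real.div_rpow hspos.le (by norm_num : (0:ℝ) ≤ 2)]
          rw [div_eq_mul_inv, ← Real.rpow_neg (by norm_num : (0:ℝ) ≤ 2), neg_sub]
          ring
        calc r ^ (β - 1) ≤ 2 ^ (1 - β) * s ^ (β - 1) := by rw [← h2]; exact h1
          _ ≤ M * s ^ (β - 1) := mul_le_mul_of_nonneg_right (le_max_right _ _)
              (Real.rpow_nonneg hspos.le _)
    have hI2 : (∫ r in (s/2)..s, Real.exp (θ * r) * r ^ (β - 1)) ≤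
        M * s ^ (β - 1) * ((Real.exp (θ * s) - Real.exp (θ * (s/2))) / θ) := by
      have hmono : (∫ r in (s/2)..s, Real.exp (θ * r) * r ^ (β - 1)) ≤
          ∫ r in (s/2)..s, Real.exp (θ * r) * (M * s ^ (β - 1)) := by
        apply intervalIntegral.integral_mono_on (by linarith) (intAux θ β hβ (s/2) s)
        · exact ((Real.continuous_exp.comp (continuous_const.mul continuous_id)).intervalIntegrable _ _).mul_const _
        · intro r hr
          exact mul_le_mul_of_nonneg_left (hpt r hr) (Real.exp_nonneg _)
      have hval : (∫ r in (s/2)..s, Real.exp (θ * r) * (M * s ^ (β - 1))) =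
          M * s ^ (β - 1) * ((Real.exp (θ * s) - Real.exp (θ * (s/2))) / θ) := by
        rw [intervalIntegral.integral_mul_const, intExp θ hθ.ne']
        ring
      linarith [hmono, hval.le]
    -- combine
    have hexp1 : Real.exp (-θ * s) * Real.exp (θ * (s/2)) = Real.exp (-(θ * s / 2)) := by
      rw [← Real.exp_add]; ring_nf
    have hkey1 : Real.exp (-θ * s) * (Real.exp (θ * (s/2)) * ((s/2) ^ β / β)) ≤
        16 / (β * θ ^ 2) * s ^ (β - 1) := by
      have hq := expQuad (θ * s / 2) (by positivity)
      have hle : (s/2) ^ β ≤ s ^ β :=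
        Real.rpow_le_rpow (by linarith) (by linarith) hβ.le
      have hsplitpow : s ^ β = s ^ (β - 1) * s := by
        rw [← Real.rpow_add_one hspos.ne' (β - 1)]; ring_nf
      have hexpinv : Real.exp (-(θ * s / 2)) = (Real.exp (θ * s / 2))⁻¹ := by
        rw [← Real.exp_neg]
      have hbound : s * Real.exp (-(θ * s / 2)) ≤ 16 / θ ^ 2 := by
        rw [hexpinv]
        rw [mul_inv_le_iff₀ (Real.exp_pos _)]
        have h1 : θ ^ 2 * s ^ 2 / 16 ≤ Real.exp (θ * s / 2) := by nlinarith
        have : s ≤ θ ^ 2 * s ^ 2 / 16 * (16 / θ ^ 2) := by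
          rw [div_mul_div_comm]
          rw [le_div_iff₀ (by positivity)]
          nlinarith
        calc s ≤ θ ^ 2 * s ^ 2 / 16 * (16 / θ ^ 2) := this
          _ ≤ Real.exp (θ * s / 2) * (16 / θ ^ 2) :=
            mul_le_mul_of_nonneg_right h1 (by positivity)
          _ = 16 / θ ^ 2 * Real.exp (θ * s / 2) := by ring
      calc Real.exp (-θ * s) * (Real.exp (θ * (s/2)) * ((s/2) ^ β / β))
          = Real.exp (-(θ * s / 2)) * ((s/2) ^ β / β) := by
            rw [← mul_assoc, hexp1]
        _ ≤ Real.exp (-(θ * s / 2)) * (s ^ β / β) := by gcongr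
        _ = s ^ (β - 1) * (s * Real.exp (-(θ * s / 2))) / β := by
            rw [hsplitpow]; ring
        _ ≤ s ^ (β - 1) * (16 / θ ^ 2) / β := by
            gcongr
        _ = 16 / (β * θ ^ 2) * s ^ (β - 1) := by
            field_simp
    have hkey2 : Real.exp (-θ * s) *
        (M * s ^ (β - 1) * ((Real.exp (θ * s) - Real.exp (θ * (s/2))) / θ)) ≤
        M / θ * s ^ (β - 1) := by
      have h1 : Real.exp (-θ * s) * ((Real.exp (θ * s) - Real.exp (θ * (s/2))) / θ) ≤ 1 / θ := by
        have h2 : Real.exp (-θ * s) * Real.exp (θ * s) = 1 := by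
          rw [neg_mul, Real.exp_neg, inv_mul_cancel₀ (Real.exp_ne_zero _)]
        have hE : Real.exp (-θ * s) * (Real.exp (θ * s) - Real.exp (θ * (s/2))) ≤ 1 := by
          nlinarith [Real.exp_pos (-θ * s), Real.exp_pos (θ * (s/2)),
            mul_pos (Real.exp_pos (-θ * s)) (Real.exp_pos (θ * (s/2)))]
        calc Real.exp (-θ * s) * ((Real.exp (θ * s) - Real.exp (θ * (s/2))) / θ)
            = Real.exp (-θ * s) * (Real.exp (θ * s) - Real.exp (θ * (s/2))) / θ := by ring
          _ ≤ 1 / θ := by gcongr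
      calc Real.exp (-θ * s) *
          (M * s ^ (β - 1) * ((Real.exp (θ * s) - Real.exp (θ * (s/2))) / θ))
          = M * s ^ (β - 1) *
            (Real.exp (-θ * s) * ((Real.exp (θ * s) - Real.exp (θ * (s/2))) / θ)) := by ring
        _ ≤ M * s ^ (β - 1) * (1 / θ) := by
            apply mul_le_mul_of_nonneg_left h1
            positivity
        _ = M / θ * s ^ (β - 1) := by ring
    have hfin : A s ≤ (16 / (β * θ ^ 2) + M / θ) * s ^ (β - 1) := by
      rw [hA, hsplit, mul_add]
      have e1 := mul_le_mul_of_nonneg_left hI1 (Real.exp_nonneg (-θ * s))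
      have e2 := mul_le_mul_of_nonneg_left hI2 (Real.exp_nonneg (-θ * s))
      calc Real.exp (-θ * s) * (∫ r in (0:ℝ)..(s/2), Real.exp (θ * r) * r ^ (β - 1)) +
            Real.exp (-θ * s) * ∫ r in (s/2)..s, Real.exp (θ * r) * r ^ (β - 1)
          ≤ 16 / (β * θ ^ 2) * s ^ (β - 1) + M / θ * s ^ (β - 1) := by
            have := le_trans e1 hkey1
            have := le_trans e2 hkey2
            linarith
        _ = (16 / (β * θ ^ 2) + M / θ) * s ^ (β - 1) := by ring
    calc A s ≤ (16 / (β * θ ^ 2) + M / θ) * s ^ (β - 1) := hfin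
      _ ≤ C * s ^ (β - 1) :=
        mul_le_mul_of_nonneg_right (le_max_right _ _) (Real.rpow_nonneg hspos.le _)
end

section
/- Let H ∈ (0,1), H ≠ 1/2, θ = 1. Then lim_{t→∞} t^{2−2H} · 2H|2H−1| e^{−2t} ∫₀^t e^u ( ∫₀^u e^v (u+v)^{2H−2} dv ) du = H|2H−1| 2^{2H−2}. -/
/-!
With `a = 2H - 2`, the substitution `w = u + v` turns the inner integral into
`e^u ∫₀^u e^v (u + v)^a dv = ∫_u^{2u} e^w w^a dw`. Both asymptotic steps are instances of one
integrated form of L'Hôpital's rule: if `f ~ D'` with `D' ≥ 0` and `D → ∞`, then `∫ f ~ D`.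
It gives `∫_1^t e^w w^a dw ~ t^a e^t`, hence `∫_u^{2u} e^w w^a dw ~ 2^a u^a e^{2u}`, and then
`∫₀^t ∫_u^{2u} e^w w^a dw du ~ 2^a t^a e^{2t} / 2`. The part of the outer integral near `0` is
finite because `a > -2`.
-/

open Real Filter intervalIntegral MeasureTheory Set Asymptotics

section

variable {f D D' : ℝ → ℝ} {s : ℝ}

theorem integral_isLittleO_of_isLittleO_deriv (hD : ∀ x ∈ Ici s, HasDerivAt D (D' x) x)
    (hD' : ContinuousOn D' (Ici s)) (hD'_nonneg : ∀ᶠ x in atTop, 0 ≤ D' x)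
    (hD_top : Tendsto D atTop atTop) (hf : ∀ t ≥ s, IntervalIntegrable f volume s t)
    (hfD : f =o[atTop] D') :
    (fun t => ∫ x in s..t, f x) =o[atTop] D := by
  refine IsLittleO.of_bound fun ε hε => ?_
  obtain ⟨T, hT⟩ := eventually_atTop.1 ((hfD.bound (half_pos hε)).and hD'_nonneg)
  set T' := max T s
  have hconst : (fun _ => ‖∫ x in s..T', f x‖ + ε / 2 * |D T'|) =o[atTop] D :=
    isLittleO_const_left.2 (Or.inr (tendsto_norm_atTop_atTop.comp hD_top))
  filter_upwards [eventually_ge_atTop T', hconst.bound (half_pos hε),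
    hD_top.eventually_ge_atTop 0] with t ht hconst_t hDt
  have hIcc : Icc T' t ⊆ Ici s := Icc_subset_Ici_iff ht |>.2 (le_max_right _ _)
  have hFTC : ∫ x in T'..t, D' x = D t - D T' :=
    integral_eq_sub_of_hasDerivAt (fun x hx => hD x (hIcc (uIcc_of_le ht ▸ hx)))
      ((hD'.mono hIcc).intervalIntegrable_of_Icc ht)
  have htail : ‖∫ x in T'..t, f x‖ ≤ ε / 2 * (D t - D T') := by
    rw [← hFTC, ← intervalIntegral.integral_const_mul]
    refine norm_integral_le_of_norm_le ht (ae_of_all _ fun x hx => ?_)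
      (((hD'.mono hIcc).intervalIntegrable_of_Icc ht).const_mul _)
    obtain ⟨hfx, hD'x⟩ := hT x ((le_max_left _ _).trans hx.1.le)
    rwa [Real.norm_of_nonneg hD'x] at hfx
  have hsplit := integral_add_adjacent_intervals (hf T' (le_max_right _ _))
    ((hf t ((le_max_right _ _).trans ht)).mono_set (by
      rw [uIcc_of_le ht, uIcc_of_le ((le_max_right _ _).trans ht)]
      exact Icc_subset_Icc_left (le_max_right _ _)))
  rw [Real.norm_of_nonneg (by positivity), Real.norm_of_nonneg hDt] at hconst_t
  rw [Real.norm_of_nonneg hDt, ← hsplit]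
  calc ‖(∫ x in s..T', f x) + ∫ x in T'..t, f x‖
      ≤ ‖∫ x in s..T', f x‖ + ε / 2 * (D t - D T') := (norm_add_le _ _).trans (by gcongr)
    _ ≤ ε * D t := by nlinarith [le_abs_self (D T'), neg_abs_le (D T')]

theorem integral_isEquivalent_of_isEquivalent_deriv (hD : ∀ x ∈ Ici s, HasDerivAt D (D' x) x)
    (hD' : ContinuousOn D' (Ici s)) (hD'_nonneg : ∀ᶠ x in atTop, 0 ≤ D' x)
    (hD_top : Tendsto D atTop atTop) (hf : ∀ t ≥ s, IntervalIntegrable f volume s t)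
    (hfD : f ~[atTop] D') :
    (fun t => ∫ x in s..t, f x) ~[atTop] D := by
  have hD'_int : ∀ t ≥ s, IntervalIntegrable D' volume s t := fun t ht =>
    (hD'.mono Icc_subset_Ici_self).intervalIntegrable_of_Icc ht
  have herr := (integral_isLittleO_of_isLittleO_deriv hD hD' hD'_nonneg hD_top
    (fun t ht => (hf t ht).sub (hD'_int t ht)) hfD.isLittleO).sub
    (isLittleO_const_left.2 (Or.inr (tendsto_norm_atTop_atTop.comp hD_top)) :
      (fun _ => D s) =o[atTop] D)
  refine herr.congr' ?_ EventuallyEq.rfl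
  filter_upwards [eventually_ge_atTop s] with t ht
  rw [intervalIntegral.integral_sub (hf t ht) (hD'_int t ht), integral_eq_sub_of_hasDerivAt
    (fun x hx => hD x (Icc_subset_Ici_self (uIcc_of_le ht ▸ hx))) (hD'_int t ht)]
  simp only [Pi.sub_apply]
  ring

end

theorem tendsto_rpow_mul_exp_mul_atTop (a : ℝ) {c : ℝ} (hc : 0 < c) :
    Tendsto (fun x => x ^ a * exp (c * x)) atTop atTop := by
  refine (tendsto_exp_mul_div_rpow_atTop (-a) c hc).congr' ?_
  filter_upwards [eventually_gt_atTop 0] with x hx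
  rw [rpow_neg hx.le, div_inv_eq_mul, mul_comm]

theorem integral_isEquivalent_rpow_mul_exp {f : ℝ → ℝ} {a c L s : ℝ} (hc : 0 < c) (hL : 0 < L)
    (hs : 0 < s) (hf : ∀ t ≥ s, IntervalIntegrable f volume s t)
    (hfg : f ~[atTop] fun x => L * (x ^ a * exp (c * x))) :
    (fun t => ∫ x in s..t, f x) ~[atTop] fun t => L * (t ^ a * exp (c * t)) / c := by
  set g : ℝ → ℝ := fun x => L * (x ^ a * exp (c * x))
  have hD : ∀ x ∈ Ici s, HasDerivAt (fun t => g t / c) (g x * (1 + a / (c * x))) x := by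
    intro x hx
    have hx0 : x ≠ 0 := (hs.trans_le hx).ne'
    refine (((hasDerivAt_rpow_const (Or.inl hx0)).mul
      ((hasDerivAt_id x).const_mul c).exp).const_mul L).div_const c |>.congr_deriv ?_
    simp only [g, id, rpow_sub_one hx0]
    field_simp
    ring
  have hD' : ContinuousOn (fun x => g x * (1 + a / (c * x))) (Ici s) := by
    have : ∀ x ∈ Ici s, c * x ≠ 0 := fun x hx => (mul_pos hc (hs.trans_le hx)).ne'
    have : ∀ x ∈ Ici s, x ≠ 0 := fun x hx => (hs.trans_le hx).ne'
    fun_prop (disch := assumption)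
  have hcorr : (fun x : ℝ => 1 + a / (c * x)) ~[atTop] Function.const ℝ (1 : ℝ) :=
    (isEquivalent_const_iff_tendsto one_ne_zero).2 <| by
      simpa using tendsto_const_nhds.add
        (tendsto_const_nhds.div_atTop (tendsto_id.const_mul_atTop hc))
  have hgD' : g ~[atTop] fun x => g x * (1 + a / (c * x)) :=
    (IsEquivalent.refl.mul hcorr.symm).congr_left (by filter_upwards with x; simp)
  have hg_top : Tendsto g atTop atTop := (tendsto_rpow_mul_exp_mul_atTop a hc).const_mul_atTop hL
  refine integral_isEquivalent_of_isEquivalent_deriv hD hD'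
    (hgD'.symm.eventually_nonneg (hg_top.eventually_ge_atTop 0)) (hg_top.atTop_div_const hc) hf
    (hfg.trans hgD')

theorem continuousOn_exp_mul_rpow (a : ℝ) : ContinuousOn (fun w => exp w * w ^ a) (Ioi 0) := by
  have : ∀ x ∈ Ioi (0 : ℝ), x ≠ 0 := fun x hx => (mem_Ioi.1 hx).ne'
  fun_prop (disch := assumption)

theorem intervalIntegrable_exp_mul_rpow (a : ℝ) {x y : ℝ} (hx : 0 < x) (hy : 0 < y) :
    IntervalIntegrable (fun w => exp w * w ^ a) volume x y :=
  ((continuousOn_exp_mul_rpow a).mono fun _ hw => (lt_min hx hy).trans_le hw.1).intervalIntegrable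

theorem exp_mul_integral_exp_mul_add_rpow (a u : ℝ) :
    exp u * ∫ v in 0..u, exp v * (u + v) ^ a = ∫ w in u..2 * u, exp w * w ^ a := by
  have h := integral_comp_add_left (a := 0) (b := u) (fun w => exp w * w ^ a) u
  rw [add_zero, ← two_mul] at h
  rw [← h, ← intervalIntegral.integral_const_mul]
  simp only [exp_add, mul_assoc]

theorem integral_exp_mul_rpow_sub {a u v : ℝ} (hu : 0 < u) (hv : 0 < v) :
    ∫ w in u..v, exp w * w ^ a = (∫ w in 1..v, exp w * w ^ a) - ∫ w in 1..u, exp w * w ^ a :=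
  (integral_interval_sub_left (intervalIntegrable_exp_mul_rpow a one_pos hv)
    (intervalIntegrable_exp_mul_rpow a one_pos hu)).symm

theorem continuousOn_integral_exp_mul_rpow_two_mul (a : ℝ) :
    ContinuousOn (fun u => ∫ w in u..2 * u, exp w * w ^ a) (Ioi 0) := by
  have hK : ContinuousOn (fun x => ∫ w in 1..x, exp w * w ^ a) (Ioi 0) := fun x hx =>
    (integral_hasDerivAt_right (intervalIntegrable_exp_mul_rpow a one_pos hx)
      ((continuousOn_exp_mul_rpow a).stronglyMeasurableAtFilter isOpen_Ioi x hx)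
      ((continuousOn_exp_mul_rpow a).continuousAt (isOpen_Ioi.mem_nhds hx))
      ).continuousAt.continuousWithinAt
  have h2 : MapsTo (fun u : ℝ => 2 * u) (Ioi 0) (Ioi 0) := fun u hu =>
    mem_Ioi.2 (mul_pos two_pos hu)
  exact ((hK.comp (by fun_prop) h2).sub hK).congr fun u hu => integral_exp_mul_rpow_sub hu (h2 hu)

theorem integral_exp_mul_rpow_isEquivalent (a : ℝ) :
    (fun t => ∫ w in 1..t, exp w * w ^ a) ~[atTop] fun t => t ^ a * exp t := by
  have h := integral_isEquivalent_rpow_mul_exp (f := fun w => exp w * w ^ a) (a := a) one_pos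
    one_pos one_pos (fun t ht => intervalIntegrable_exp_mul_rpow a one_pos (one_pos.trans_le ht))
    (by simp only [one_mul, mul_comm (exp _)]; exact IsEquivalent.refl)
  simpa only [one_mul, div_one] using h

theorem integral_exp_mul_rpow_two_mul_isEquivalent (a : ℝ) :
    (fun u => ∫ w in u..2 * u, exp w * w ^ a) ~[atTop] fun u => 2 ^ a * (u ^ a * exp (2 * u)) := by
  have hK := integral_exp_mul_rpow_isEquivalent a
  have hK2 : (fun u => ∫ w in 1..2 * u, exp w * w ^ a) ~[atTop]
      fun u => 2 ^ a * (u ^ a * exp (2 * u)) := by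
    refine (hK.comp_tendsto (tendsto_id.const_mul_atTop two_pos)).congr_right ?_
    filter_upwards [eventually_gt_atTop 0] with u hu
    simp only [Function.comp_apply, id, mul_rpow two_pos.le hu.le, mul_assoc]
  have hsmall : (fun u => ∫ w in 1..u, exp w * w ^ a) =o[atTop]
      fun u => 2 ^ a * (u ^ a * exp (2 * u)) := by
    refine hK.trans_isLittleO (IsLittleO.const_mul_right (by positivity)
      ((isBigO_refl (fun u : ℝ => u ^ a) _).mul_isLittleO ?_))
    exact isLittleO_exp_comp_exp_comp.2 (tendsto_id.congr fun u => by simp only [id]; ring)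
  refine (hK2.sub_isLittleO hsmall).congr_left ?_
  filter_upwards [eventually_gt_atTop 0] with u hu
  exact (integral_exp_mul_rpow_sub hu (mul_pos two_pos hu)).symm

theorem intervalIntegrable_integral_exp_mul_rpow_two_mul {a : ℝ} (ha : -2 < a) (ha0 : a ≤ 0) :
    IntervalIntegrable (fun u => ∫ w in u..2 * u, exp w * w ^ a) volume 0 1 := by
  rw [intervalIntegrable_iff_integrableOn_Ioc_of_le zero_le_one]
  have hbound : IntegrableOn (fun u : ℝ => exp 2 * u ^ (a + 1)) (Ioc 0 1) :=
    ((intervalIntegrable_iff_integrableOn_Ioc_of_le zero_le_one).1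
      (intervalIntegrable_rpow' (by linarith))).const_mul _
  refine hbound.mono' (((continuousOn_integral_exp_mul_rpow_two_mul a).mono
    Ioc_subset_Ioi_self).aestronglyMeasurable measurableSet_Ioc) ?_
  filter_upwards [self_mem_ae_restrict measurableSet_Ioc] with u ⟨hu0, hu1⟩
  have hpoint : ∀ w ∈ uIoc u (2 * u), ‖exp w * w ^ a‖ ≤ exp (2 * u) * u ^ a := by
    intro w hw
    rw [uIoc_of_le (by linarith)] at hw
    have hw0 : 0 < w := hu0.trans hw.1
    rw [Real.norm_of_nonneg (by positivity)]
    exact mul_le_mul (exp_le_exp.2 hw.2) (rpow_le_rpow_of_nonpos hu0 hw.1.le ha0)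
      (by positivity) (by positivity)
  calc ‖∫ w in u..2 * u, exp w * w ^ a‖ ≤ exp (2 * u) * u ^ a * |2 * u - u| :=
        norm_integral_le_of_norm_le_const hpoint
    _ ≤ exp 2 * u ^ (a + 1) := by
        rw [rpow_add_one hu0.ne', show 2 * u - u = u by ring, abs_of_pos hu0, mul_assoc]
        gcongr
        linarith

theorem integral_integral_exp_mul_rpow_two_mul_isEquivalent {a : ℝ} (ha : -2 < a) (ha0 : a ≤ 0) :
    (fun t => ∫ u in 0..t, ∫ w in u..2 * u, exp w * w ^ a) ~[atTop]
      fun t => 2 ^ a * (t ^ a * exp (2 * t)) / 2 := by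
  have hq : ∀ t ≥ (1 : ℝ),
      IntervalIntegrable (fun u => ∫ w in u..2 * u, exp w * w ^ a) volume 1 t :=
    fun t ht => ((continuousOn_integral_exp_mul_rpow_two_mul a).mono
      fun u hu => one_pos.trans_le hu.1).intervalIntegrable_of_Icc ht
  have htail := integral_isEquivalent_rpow_mul_exp two_pos (by positivity) one_pos hq
    (integral_exp_mul_rpow_two_mul_isEquivalent a)
  have hhead : (fun _ => ∫ u in 0..1, ∫ w in u..2 * u, exp w * w ^ a) =o[atTop]
      fun t => 2 ^ a * (t ^ a * exp (2 * t)) / 2 :=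
    isLittleO_const_left.2 <| Or.inr <| tendsto_norm_atTop_atTop.comp <|
      ((tendsto_rpow_mul_exp_mul_atTop a two_pos).const_mul_atTop (by positivity)).atTop_div_const
        two_pos
  refine (hhead.add_isEquivalent htail).congr_left ?_
  filter_upwards [eventually_ge_atTop 1] with t ht
  exact integral_add_adjacent_intervals (intervalIntegrable_integral_exp_mul_rpow_two_mul ha ha0)
    (hq t ht)

theorem stmt_8_general (H : ℝ) (hH : H ∈ Set.Ioo (0:ℝ) 1) :
    Tendsto (fun t : ℝ =>
        t ^ (2 - 2*H) * (2 * H * |2*H - 1| * Real.exp (-2*t) *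
          ∫ u in (0:ℝ)..t, Real.exp u * ∫ v in (0:ℝ)..u, Real.exp v * (u + v) ^ (2*H - 2)))
      atTop (nhds (H * |2*H - 1| * 2 ^ (2*H - 2))) := by
  obtain ⟨hH0, hH1⟩ := hH
  have hequiv := integral_integral_exp_mul_rpow_two_mul_isEquivalent (a := 2 * H - 2)
    (by linarith) (by linarith)
  have hratio := ((isEquivalent_iff_tendsto_one (eventually_gt_atTop 0 |>.mono fun t ht => by
    positivity)).1 hequiv).const_mul (H * |2*H - 1| * 2 ^ (2*H - 2))
  rw [mul_one] at hratio
  refine hratio.congr' ?_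
  filter_upwards [eventually_gt_atTop 0] with t ht
  simp only [exp_mul_integral_exp_mul_add_rpow, Pi.div_apply]
  rw [show 2 - 2 * H = -(2 * H - 2) by ring, rpow_neg ht.le, neg_mul, exp_neg]
  field_simp

theorem stmt_8 (H : ℝ) (hH : H ∈ Set.Ioo (0:ℝ) 1) (hH2 : H ≠ 1/2) :
    Tendsto (fun t : ℝ =>
        t ^ (2 - 2*H) * (2 * H * |2*H - 1| * Real.exp (-2*t) *
          ∫ u in (0:ℝ)..t, Real.exp u * ∫ v in (0:ℝ)..u, Real.exp v * (u + v) ^ (2*H - 2)))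
      atTop (nhds (H * |2*H - 1| * 2 ^ (2*H - 2))) :=
  stmt_8_general H hH
end

section
/- Let H' > 0, K ∈ (0,2) with H = H'K ∈ (0,1), fix s > 0 and let t > 2s. Then (1/t^H) ∫₀^s ∫_s^t [ (u+v)^{2H−2} + (u^{2H'} + v^{2H'})^{K−2} (uv)^{2H'−1} ] dv du → 0 as t → ∞. -/
open Real Filter intervalIntegral
open MeasureTheory

lemma myII {a b : ℝ} (ha : 0 < a) (hab : a ≤ b) (α : ℝ) :
    IntervalIntegrable (fun v : ℝ => v ^ α) volume a b := by
  apply ContinuousOn.intervalIntegrable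
  apply ContinuousOn.rpow_const continuousOn_id
  intro v hv
  rw [Set.uIcc_of_le hab] at hv
  exact Or.inl (ne_of_gt (lt_of_lt_of_le ha hv.1))

lemma lemM (s α β : ℝ) (hs : 0 < s) (hβ : 0 < β) (hαβ : α + 1 < β) :
    Tendsto (fun t : ℝ => (∫ v in s..t, v ^ α) / t ^ β) atTop (nhds 0) := by
  set α' := max α (β / 2 - 1) with hα'def
  have hα'1 : (-1 : ℝ) < α' := lt_of_lt_of_le (by linarith) (le_max_right _ _)
  have hαα' : α ≤ α' := le_max_left _ _
  have hα'β : α' < β - 1 := max_lt (by linarith) (by linarith)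
  have hpos : (0:ℝ) < α' + 1 := by linarith
  set D := s ^ (α - α') / (α' + 1) with hD
  have hbound : Tendsto (fun t : ℝ => D * t ^ (-(β - (α' + 1)))) atTop (nhds 0) := by
    have := (tendsto_rpow_neg_atTop (show (0:ℝ) < β - (α' + 1) by linarith)).const_mul D
    simpa using this
  apply tendsto_of_tendsto_of_tendsto_of_le_of_le' tendsto_const_nhds hbound
  · filter_upwards [eventually_ge_atTop s] with t hst
    have ht : (0:ℝ) < t := lt_of_lt_of_le hs hst
    exact div_nonneg
      (intervalIntegral.integral_nonneg hst fun v hv => rpow_nonneg (le_trans hs.le hv.1) _)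
      (rpow_nonneg ht.le _)
  · filter_upwards [eventually_ge_atTop s] with t hst
    have ht : (0:ℝ) < t := lt_of_lt_of_le hs hst
    have h1 : (∫ v in s..t, v ^ α) ≤ ∫ v in s..t, s ^ (α - α') * v ^ α' := by
      apply intervalIntegral.integral_mono_on hst (myII hs hst α)
        ((myII hs hst α').const_mul _)
      intro v hv
      have hv0 : (0:ℝ) < v := lt_of_lt_of_le hs hv.1
      have : v ^ α = v ^ (α - α') * v ^ α' := by
        rw [← Real.rpow_add hv0]; ring_nf
      rw [this]
      exact mul_le_mul_of_nonneg_right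
        (Real.rpow_le_rpow_of_nonpos hs hv.1 (by linarith)) (rpow_nonneg hv0.le _)
    have h2 : (∫ v in s..t, s ^ (α - α') * v ^ α') = s ^ (α - α') * ((t ^ (α' + 1) - s ^ (α' + 1)) / (α' + 1)) := by
      rw [intervalIntegral.integral_const_mul, integral_rpow (Or.inl hα'1)]
    have h3 : (∫ v in s..t, v ^ α) ≤ s ^ (α - α') * (t ^ (α' + 1) / (α' + 1)) := by
      refine le_trans h1 (le_trans h2.le ?_)
      have hss : (0:ℝ) ≤ s ^ (α' + 1) := rpow_nonneg hs.le _
      apply mul_le_mul_of_nonneg_left _ (rpow_nonneg hs.le _)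
      gcongr
      · linarith [rpow_nonneg hs.le (α' + 1)]
    calc (∫ v in s..t, v ^ α) / t ^ β
        ≤ (s ^ (α - α') * (t ^ (α' + 1) / (α' + 1))) / t ^ β := by
          gcongr
      _ = D * t ^ (-(β - (α' + 1))) := by
          rw [show -(β - (α' + 1)) = (α' + 1) - β by ring, Real.rpow_sub ht, hD]
          ring

theorem stmt_13 (H' K H s : ℝ) (hH' : 0 < H') (hK : K ∈ Set.Ioo (0:ℝ) 2)
    (hH : H = H' * K) (hH01 : H ∈ Set.Ioo (0:ℝ) 1) (hs : 0 < s) :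
    Tendsto (fun t : ℝ =>
        (1 / t ^ H) * ∫ u in (0:ℝ)..s, ∫ v in s..t,
          ((u + v) ^ (2*H - 2) + (u ^ (2*H') + v ^ (2*H')) ^ (K - 2) * (u*v) ^ (2*H' - 1)))
      atTop (nhds 0) := by
  obtain ⟨hK0, hK2⟩ := hK
  obtain ⟨hH0, hH1⟩ := hH01
  set A : ℝ → ℝ := fun t => ∫ v in s..t, v ^ (2*H - 2) with hA
  set B : ℝ → ℝ := fun t => ∫ v in s..t, v ^ (2*H - 2*H' - 1) with hB
  set C : ℝ := ∫ u in (0:ℝ)..s, u ^ (2*H' - 1) with hC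
  have hCnn : 0 ≤ C :=
    intervalIntegral.integral_nonneg hs.le fun u hu => rpow_nonneg hu.1 _
  have tendA : Tendsto (fun t => A t / t ^ H) atTop (nhds 0) :=
    lemM s _ H hs hH0 (by linarith)
  have tendB : Tendsto (fun t => B t / t ^ H) atTop (nhds 0) := by
    apply lemM s _ H hs hH0
    nlinarith
  have hbound : Tendsto (fun t => s * (A t / t ^ H) + C * (B t / t ^ H)) atTop (nhds 0) := by
    have := (tendA.const_mul s).add (tendB.const_mul C)
    simpa using this
  apply tendsto_of_tendsto_of_tendsto_of_le_of_le' tendsto_const_nhds hbound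
  · filter_upwards [eventually_ge_atTop s] with t hst
    have ht : (0:ℝ) < t := lt_of_lt_of_le hs hst
    apply mul_nonneg (by positivity)
    apply intervalIntegral.integral_nonneg hs.le
    intro u hu
    apply intervalIntegral.integral_nonneg hst
    intro v hv
    have hu0 : (0:ℝ) ≤ u := hu.1
    have hv0 : (0:ℝ) ≤ v := le_trans hs.le hv.1
    exact add_nonneg (rpow_nonneg (add_nonneg hu0 hv0) _)
      (mul_nonneg
        (rpow_nonneg (add_nonneg (rpow_nonneg hu0 _) (rpow_nonneg hv0 _)) _)
        (rpow_nonneg (mul_nonneg hu0 hv0) _))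
  · filter_upwards [eventually_ge_atTop s] with t hst
    have ht : (0:ℝ) < t := lt_of_lt_of_le hs hst
    have htH : (0:ℝ) < t ^ H := rpow_pos_of_pos ht H
    have hInner : ∀ u ∈ Set.Ioc (0:ℝ) s,
        (∫ v in s..t, ((u + v) ^ (2*H - 2)
            + (u ^ (2*H') + v ^ (2*H')) ^ (K - 2) * (u*v) ^ (2*H' - 1)))
          ≤ A t + u ^ (2*H' - 1) * B t := by
      intro u hu
      have hu0 : (0:ℝ) < u := hu.1
      have hfc : ContinuousOn (fun v : ℝ => (u + v) ^ (2*H - 2)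
          + (u ^ (2*H') + v ^ (2*H')) ^ (K - 2) * (u*v) ^ (2*H' - 1)) (Set.uIcc s t) := by
        rw [Set.uIcc_of_le hst]
        apply ContinuousOn.add
        · apply ContinuousOn.rpow_const (continuousOn_const.add continuousOn_id)
          intro v hv
          exact Or.inl (ne_of_gt (add_pos hu0 (lt_of_lt_of_le hs hv.1)))
        · apply ContinuousOn.mul
          · apply ContinuousOn.rpow_const
              (continuousOn_const.add (ContinuousOn.rpow_const continuousOn_id
                (fun v hv => Or.inl (ne_of_gt (lt_of_lt_of_le hs hv.1)))))
            intro v hv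
            exact Or.inl (ne_of_gt (add_pos (rpow_pos_of_pos hu0 _)
              (rpow_pos_of_pos (lt_of_lt_of_le hs hv.1) _)))
          · apply ContinuousOn.rpow_const (continuousOn_const.mul continuousOn_id)
            intro v hv
            exact Or.inl (ne_of_gt (mul_pos hu0 (lt_of_lt_of_le hs hv.1)))
      have hmono : (∫ v in s..t, ((u + v) ^ (2*H - 2)
            + (u ^ (2*H') + v ^ (2*H')) ^ (K - 2) * (u*v) ^ (2*H' - 1)))
          ≤ ∫ v in s..t, (v ^ (2*H - 2) + u ^ (2*H' - 1) * v ^ (2*H - 2*H' - 1)) := by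
        apply intervalIntegral.integral_mono_on hst hfc.intervalIntegrable
          ((myII hs hst _).add ((myII hs hst _).const_mul _))
        intro v hv
        have hv0 : (0:ℝ) < v := lt_of_lt_of_le hs hv.1
        have e1 : (u + v) ^ (2*H - 2) ≤ v ^ (2*H - 2) :=
          Real.rpow_le_rpow_of_nonpos hv0 (by linarith) (by linarith)
        have e2 : (u ^ (2*H') + v ^ (2*H')) ^ (K - 2) ≤ v ^ (2*H' * (K - 2)) := by
          rw [Real.rpow_mul hv0.le (2*H') (K-2)]
          exact Real.rpow_le_rpow_of_nonpos (rpow_pos_of_pos hv0 (2*H'))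
            (le_add_of_nonneg_left (rpow_nonneg hu0.le (2*H')))
            (show K - 2 ≤ 0 by linarith)
        have e3 : (u * v) ^ (2*H' - 1) = u ^ (2*H' - 1) * v ^ (2*H' - 1) :=
          Real.mul_rpow hu0.le hv0.le
        have e4 : v ^ (2*H' * (K - 2)) * v ^ (2*H' - 1) = v ^ (2*H - 2*H' - 1) := by
          rw [← Real.rpow_add hv0]
          congr 1
          rw [hH]; ring
        calc (u + v) ^ (2*H - 2) + (u ^ (2*H') + v ^ (2*H')) ^ (K - 2) * (u*v) ^ (2*H' - 1)
            ≤ v ^ (2*H - 2) + v ^ (2*H' * (K - 2)) * (u ^ (2*H' - 1) * v ^ (2*H' - 1)) := by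
              rw [e3]
              exact add_le_add e1 (mul_le_mul_of_nonneg_right e2
                (mul_nonneg (rpow_nonneg hu0.le _) (rpow_nonneg hv0.le _)))
          _ = v ^ (2*H - 2) + u ^ (2*H' - 1) * (v ^ (2*H' * (K - 2)) * v ^ (2*H' - 1)) := by
              ring
          _ = v ^ (2*H - 2) + u ^ (2*H' - 1) * v ^ (2*H - 2*H' - 1) := by rw [e4]
      refine hmono.trans_eq ?_
      rw [intervalIntegral.integral_add (myII hs hst _) ((myII hs hst _).const_mul _),
        intervalIntegral.integral_const_mul]
    have key : (∫ u in (0:ℝ)..s, ∫ v in s..t,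
          ((u + v) ^ (2*H - 2) + (u ^ (2*H') + v ^ (2*H')) ^ (K - 2) * (u*v) ^ (2*H' - 1)))
        ≤ s * A t + C * B t := by
      rw [intervalIntegral.integral_of_le hs.le]
      have hGint : IntegrableOn (fun u : ℝ => A t + u ^ (2*H' - 1) * B t) (Set.Ioc 0 s) :=
        (intervalIntegrable_iff_integrableOn_Ioc_of_le hs.le).mp
          (intervalIntegrable_const.add
            ((intervalIntegrable_rpow' (by linarith)).mul_const _))
      have hfnn : 0 ≤ᵐ[volume.restrict (Set.Ioc (0:ℝ) s)] fun u => ∫ v in s..t,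
          ((u + v) ^ (2*H - 2) + (u ^ (2*H') + v ^ (2*H')) ^ (K - 2) * (u*v) ^ (2*H' - 1)) := by
        filter_upwards [ae_restrict_mem measurableSet_Ioc] with u hu
        apply intervalIntegral.integral_nonneg hst
        intro v hv
        have hu0 : (0:ℝ) ≤ u := hu.1.le
        have hv0 : (0:ℝ) ≤ v := le_trans hs.le hv.1
        exact add_nonneg (rpow_nonneg (add_nonneg hu0 hv0) _)
          (mul_nonneg
            (rpow_nonneg (add_nonneg (rpow_nonneg hu0 _) (rpow_nonneg hv0 _)) _)
            (rpow_nonneg (mul_nonneg hu0 hv0) _))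
      have hle : (fun u => ∫ v in s..t,
            ((u + v) ^ (2*H - 2) + (u ^ (2*H') + v ^ (2*H')) ^ (K - 2) * (u*v) ^ (2*H' - 1)))
          ≤ᵐ[volume.restrict (Set.Ioc (0:ℝ) s)] fun u => A t + u ^ (2*H' - 1) * B t := by
        filter_upwards [ae_restrict_mem measurableSet_Ioc] with u hu
        exact hInner u hu
      have hmain := MeasureTheory.integral_mono_of_nonneg hfnn hGint hle
      have hGval : (∫ u in Set.Ioc (0:ℝ) s, (A t + u ^ (2*H' - 1) * B t))
          = s * A t + C * B t := by
        rw [← intervalIntegral.integral_of_le hs.le,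
          intervalIntegral.integral_add intervalIntegrable_const
            ((intervalIntegrable_rpow' (by linarith)).mul_const _),
          intervalIntegral.integral_const, intervalIntegral.integral_mul_const]
        simp only [smul_eq_mul, sub_zero, ← hC]
        try ring
      exact le_trans hmain (le_of_eq hGval)
    calc (1 / t ^ H) * ∫ u in (0:ℝ)..s, ∫ v in s..t,
          ((u + v) ^ (2*H - 2) + (u ^ (2*H') + v ^ (2*H')) ^ (K - 2) * (u*v) ^ (2*H' - 1))
        ≤ (1 / t ^ H) * (s * A t + C * B t) :=
          mul_le_mul_of_nonneg_left key (by positivity)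
      _ = s * (A t / t ^ H) + C * (B t / t ^ H) := by ring
end

section
/- Suppose F and G are normalized functions of bounded variation on ℝ (right continuous with F(−∞) = G(−∞) = 0) and there are no points of [0,T] at which F and G are both discontinuous. Then −∫_{[0,T]} G dμ_F = ∫_{[0,T]} F dμ_G − F(T)G(T) + F(0−)G(0−), where μ_F, μ_G are the Lebesgue–Stieltjes signed measures associated to F and G. -/
/-!
For monotone right-continuous `f`, `g` and `a ≤ b`, after subtracting the boundary terms
`g(a-) μ_f[a,b]` and `f(a-) μ_g[a,b]`, the integrals `∫ g dμ_f` and `∫ f(·-) dμ_g` over `[a,b]`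
are the `μ_f ⊗ μ_g`-masses of the complementary regions `{y ≤ x}` and `{x < y}` of `[a,b]²`;
hence they add up to `f b * g b - f(a-) * g(a-)`. Extending bilinearly to `F = F₁ - F₂` and
`G = G₁ - G₂` leaves the discrepancy `∫ (F - F(·-)) d(μ_{G₁} - μ_{G₂})`, a countable sum over the
jumps of `F`. Each jump sits at a point where `G` is continuous, where `μ_{G₁}` and `μ_{G₂}` have
the same atom, so the discrepancy vanishes.
-/

open Filter MeasureTheory Set Function

namespace MeasureTheory

variable {α β : Type*} [MeasurableSpace α] [MeasurableSpace β]

theorem integral_measureReal_prodMk_left (μ : Measure α) (ν : Measure β) [IsFiniteMeasure μ]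
    [IsFiniteMeasure ν] {s : Set (α × β)} (hs : MeasurableSet s) :
    ∫ x, ν.real (Prod.mk x ⁻¹' s) ∂μ = (μ.prod ν).real s := by
  simp only [measureReal_def]
  rw [integral_toReal (measurable_measure_prodMk_left hs).aemeasurable
    (ae_of_all _ fun _ => measure_lt_top _ _), Measure.prod_apply hs]

theorem integral_measureReal_prodMk_right (μ : Measure α) (ν : Measure β) [IsFiniteMeasure μ]
    [IsFiniteMeasure ν] {s : Set (α × β)} (hs : MeasurableSet s) :
    ∫ y, μ.real ((fun x => (x, y)) ⁻¹' s) ∂ν = (μ.prod ν).real s := by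
  simp only [measureReal_def]
  rw [integral_toReal (measurable_measure_prodMk_right hs).aemeasurable
    (ae_of_all _ fun _ => measure_lt_top _ _), Measure.prod_apply_symm hs]

theorem setIntegral_congr_measure_of_countable_support [MeasurableSingletonClass α]
    {E : Type*} [NormedAddCommGroup E] [NormedSpace ℝ E]
    [CompleteSpace E] {μ ν : Measure α} {s : Set α}
    {j : α → E} (hs : MeasurableSet s) (hj : (s ∩ support j).Countable)
    (hμ : IntegrableOn j s μ) (hν : IntegrableOn j s ν)
    (h : ∀ x ∈ s, j x ≠ 0 → μ {x} = ν {x}) :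
    ∫ x in s, j x ∂μ = ∫ x in s, j x ∂ν := by
  have hsupp : ∀ ρ : Measure α, ∫ x in s, j x ∂ρ = ∫ x in s ∩ support j, j x ∂ρ := fun ρ =>
    setIntegral_eq_of_subset_of_forall_sdiff_eq_zero hs inter_subset_left
      fun x hx => by simpa [hx.1] using hx.2
  rw [hsupp, hsupp, setIntegral_countable _ hj (hμ.mono_set inter_subset_left),
    setIntegral_countable _ hj (hν.mono_set inter_subset_left)]
  exact tsum_congr fun ⟨x, hxs, hxj⟩ => by simp only [measureReal_def, h x hxs hxj]

instance isFiniteMeasure_restrict_Icc {γ : Type*} [MeasurableSpace γ] [Preorder γ]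
    [TopologicalSpace γ] [CompactIccSpace γ] {μ : Measure γ} [IsLocallyFiniteMeasure μ]
    {a b : γ} : IsFiniteMeasure (μ.restrict (Icc a b)) :=
  isFiniteMeasure_restrict.2 measure_Icc_lt_top.ne

end MeasureTheory

namespace StieltjesFunction

variable (f g : StieltjesFunction ℝ) {a b x : ℝ}

theorem leftLim_sub : leftLim (⇑f - ⇑g) = leftLim f - leftLim g :=
  funext fun x => leftLim_eq_of_tendsto ((f.mono.tendsto_leftLim x).sub (g.mono.tendsto_leftLim x))

theorem measure_singleton_eq_of_continuousAt_sub (h : ContinuousAt (⇑f - ⇑g) x) :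
    f.measure {x} = g.measure {x} := by
  have := h.continuousWithinAt.leftLim_eq
  rw [leftLim_sub, Pi.sub_apply, Pi.sub_apply] at this
  rw [measure_singleton, measure_singleton]
  congr 1
  linarith

theorem countable_support_sub_leftLim_sub :
    (support fun x => (⇑f - ⇑g) x - leftLim (⇑f - ⇑g) x).Countable := by
  refine (f.countable_leftLim_ne.union g.countable_leftLim_ne).mono fun x hx => ?_
  by_contra h
  simp only [mem_union, mem_ofPred_eq, not_or, not_not] at h
  simp [leftLim_sub, h.1, h.2] at hx

theorem measure_restrict_Icc_Iic (hx : x ∈ Icc a b) :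
    g.measure.restrict (Icc a b) (Iic x) = ENNReal.ofReal (g x - leftLim g a) := by
  have : Iic x ∩ Icc a b = Icc a x := by
    ext y; simp only [mem_inter_iff, mem_Iic, mem_Icc]
    exact ⟨fun h => ⟨h.2.1, h.1⟩, fun h => ⟨h.2, h.1, h.2.trans hx.2⟩⟩
  rw [Measure.restrict_apply measurableSet_Iic, this, measure_Icc]

theorem measure_restrict_Icc_Iio (hx : x ∈ Icc a b) :
    f.measure.restrict (Icc a b) (Iio x) = ENNReal.ofReal (leftLim f x - leftLim f a) := by
  rw [Measure.restrict_apply measurableSet_Iio]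
  have : Iio x ∩ Icc a b = Ico a x := by
    ext y; simp only [mem_inter_iff, mem_Iio, mem_Icc, mem_Ico]
    exact ⟨fun h => ⟨h.2.1, h.1⟩, fun h => ⟨h.2, h.1, h.2.le.trans hx.2⟩⟩
  rw [this, measure_Ico]

theorem measureReal_Icc (hab : a ≤ b) : f.measure.real (Icc a b) = f b - leftLim f a := by
  rw [measureReal_def, measure_Icc, ENNReal.toReal_ofReal (sub_nonneg.2 (f.mono.leftLim_le hab))]

theorem setIntegral_sub_leftLim_eq_measureReal_prod :
    ∫ x in Icc a b, (g x - leftLim g a) ∂f.measure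
      = ((f.measure.restrict (Icc a b)).prod (g.measure.restrict (Icc a b))).real
          {p | p.2 ≤ p.1} := by
  rw [← integral_measureReal_prodMk_left _ _ (measurableSet_le measurable_snd measurable_fst)]
  refine setIntegral_congr_fun measurableSet_Icc fun x hx => ?_
  change _ = (g.measure.restrict (Icc a b)).real (Iic x)
  rw [measureReal_def, measure_restrict_Icc_Iic g hx,
    ENNReal.toReal_ofReal (sub_nonneg.2 (g.mono.leftLim_le hx.1))]

theorem setIntegral_leftLim_sub_leftLim_eq_measureReal_prod :
    ∫ y in Icc a b, (leftLim f y - leftLim f a) ∂g.measure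
      = ((f.measure.restrict (Icc a b)).prod (g.measure.restrict (Icc a b))).real
          {p | p.1 < p.2} := by
  rw [← integral_measureReal_prodMk_right _ _ (measurableSet_lt measurable_fst measurable_snd)]
  refine setIntegral_congr_fun measurableSet_Icc fun y hy => ?_
  change _ = (f.measure.restrict (Icc a b)).real (Iio y)
  rw [measureReal_def, measure_restrict_Icc_Iio f hy,
    ENNReal.toReal_ofReal (sub_nonneg.2 (f.mono.leftLim hy.1))]

theorem setIntegral_add_setIntegral_leftLim (hab : a ≤ b) :
    ∫ x in Icc a b, g x ∂f.measure + ∫ x in Icc a b, leftLim f x ∂g.measure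
      = f b * g b - leftLim f a * leftLim g a := by
  set P := (f.measure.restrict (Icc a b)).prod (g.measure.restrict (Icc a b))
  have hg : ∫ x in Icc a b, g x ∂f.measure
      = P.real {p | p.2 ≤ p.1} + leftLim g a * (f b - leftLim f a) := by
    rw [← setIntegral_sub_leftLim_eq_measureReal_prod, integral_sub
      (g.mono.locallyIntegrable.integrableOn_isCompact isCompact_Icc) (integrable_const _),
      setIntegral_const, f.measureReal_Icc hab, smul_eq_mul]
    ring
  have hf : ∫ x in Icc a b, leftLim f x ∂g.measure
      = P.real {p | p.1 < p.2} + leftLim f a * (g b - leftLim g a) := by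
    rw [← setIntegral_leftLim_sub_leftLim_eq_measureReal_prod, integral_sub
      (f.mono.leftLim.locallyIntegrable.integrableOn_isCompact isCompact_Icc)
      (integrable_const _), setIntegral_const, g.measureReal_Icc hab, smul_eq_mul]
    ring
  have hcompl : {p : ℝ × ℝ | p.1 < p.2} = {p | p.2 ≤ p.1}ᶜ := by
    ext p; simp [not_le]
  have htotal : P.real {p | p.2 ≤ p.1} + P.real {p | p.1 < p.2}
      = (f b - leftLim f a) * (g b - leftLim g a) := by
    rw [hcompl, measureReal_add_measureReal_compl (measurableSet_le measurable_snd measurable_fst),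
      ← univ_prod_univ, measureReal_prod_prod, measureReal_restrict_apply_univ,
      measureReal_restrict_apply_univ, f.measureReal_Icc hab, g.measureReal_Icc hab]
  rw [hg, hf]
  linear_combination htotal

theorem setIntegral_sub_leftLim_eq_of_continuousAt (f₁ f₂ g₁ g₂ : StieltjesFunction ℝ)
    (h : ∀ x ∈ Icc a b, ContinuousAt (⇑f₁ - ⇑f₂) x ∨ ContinuousAt (⇑g₁ - ⇑g₂) x) :
    ∫ x in Icc a b, ((⇑f₁ - ⇑f₂) x - leftLim (⇑f₁ - ⇑f₂) x) ∂g₁.measure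
      = ∫ x in Icc a b, ((⇑f₁ - ⇑f₂) x - leftLim (⇑f₁ - ⇑f₂) x) ∂g₂.measure := by
  have hj (g : StieltjesFunction ℝ) : IntegrableOn
      (fun x => (⇑f₁ - ⇑f₂) x - leftLim (⇑f₁ - ⇑f₂) x) (Icc a b) g.measure := by
    have hmono {φ : ℝ → ℝ} (hφ : Monotone φ) : IntegrableOn φ (Icc a b) g.measure :=
      hφ.locallyIntegrable.integrableOn_isCompact isCompact_Icc
    simp only [leftLim_sub, Pi.sub_apply]
    exact ((hmono f₁.mono).sub (hmono f₂.mono)).sub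
      ((hmono f₁.mono.leftLim).sub (hmono f₂.mono.leftLim))
  refine setIntegral_congr_measure_of_countable_support measurableSet_Icc
    ((countable_support_sub_leftLim_sub f₁ f₂).mono inter_subset_right) (hj g₁) (hj g₂)
    fun x hx hjump => measure_singleton_eq_of_continuousAt_sub g₁ g₂ ?_
  refine (h x hx).resolve_left fun hc => hjump ?_
  rw [hc.continuousWithinAt.leftLim_eq, sub_self]

end StieltjesFunction

open StieltjesFunction

theorem stmt_15_general (T : ℝ) (hT : 0 < T)
    (F₁ F₂ G₁ G₂ : StieltjesFunction ℝ) (F G : ℝ → ℝ)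
    (hF : ∀ x, F x = F₁ x - F₂ x) (hG : ∀ x, G x = G₁ x - G₂ x)
    (hdisc : ∀ x ∈ Set.Icc (0:ℝ) T, ContinuousAt F x ∨ ContinuousAt G x) :
    -((∫ x in Set.Icc (0:ℝ) T, G x ∂F₁.measure) - ∫ x in Set.Icc (0:ℝ) T, G x ∂F₂.measure)
      = ((∫ x in Set.Icc (0:ℝ) T, F x ∂G₁.measure) - ∫ x in Set.Icc (0:ℝ) T, F x ∂G₂.measure)
        - F T * G T + Function.leftLim F 0 * Function.leftLim G 0 := by
  obtain rfl : F = ⇑F₁ - ⇑F₂ := funext hF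
  obtain rfl : G = ⇑G₁ - ⇑G₂ := funext hG
  have hmono (μ : StieltjesFunction ℝ) {φ : ℝ → ℝ} (hφ : Monotone φ) :
      IntegrableOn φ (Icc 0 T) μ.measure :=
    hφ.locallyIntegrable.integrableOn_isCompact isCompact_Icc
  have hjump := setIntegral_sub_leftLim_eq_of_continuousAt F₁ F₂ G₁ G₂ hdisc
  simp only [leftLim_sub, integral_sub ((hmono _ F₁.mono).sub (hmono _ F₂.mono))
      ((hmono _ F₁.mono.leftLim).sub (hmono _ F₂.mono.leftLim))] at hjump ⊢
  simp only [integral_sub (hmono _ F₁.mono) (hmono _ F₂.mono),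
    integral_sub (hmono _ G₁.mono) (hmono _ G₂.mono),
    integral_sub (hmono _ F₁.mono.leftLim) (hmono _ F₂.mono.leftLim), Pi.sub_apply] at hjump ⊢
  have key (f g : StieltjesFunction ℝ) := setIntegral_add_setIntegral_leftLim f g hT.le
  linear_combination -key F₁ G₁ + key F₁ G₂ + key F₂ G₁ - key F₂ G₂ - hjump

/-- Integration by parts for normalized functions of bounded variation, written as
differences of (right-continuous, monotone) Stieltjes functions with associated
Lebesgue–Stieltjes measures. -/
theorem stmt_15 (T : ℝ) (hT : 0 < T)
    (F₁ F₂ G₁ G₂ : StieltjesFunction ℝ) (F G : ℝ → ℝ)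
    (hF : ∀ x, F x = F₁ x - F₂ x) (hG : ∀ x, G x = G₁ x - G₂ x)
    (hFbot : Tendsto F atBot (nhds 0)) (hGbot : Tendsto G atBot (nhds 0))
    (hdisc : ∀ x ∈ Set.Icc (0:ℝ) T, ContinuousAt F x ∨ ContinuousAt G x) :
    -((∫ x in Set.Icc (0:ℝ) T, G x ∂F₁.measure) - ∫ x in Set.Icc (0:ℝ) T, G x ∂F₂.measure)
      = ((∫ x in Set.Icc (0:ℝ) T, F x ∂G₁.measure) - ∫ x in Set.Icc (0:ℝ) T, F x ∂G₂.measure)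
        - F T * G T + Function.leftLim F 0 * Function.leftLim G 0 :=
  stmt_15_general T hT F₁ F₂ G₁ G₂ F G hF hG hdisc
end
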